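/- arXiv:2311.09123 — 2 statements merged into one kernel-verified Lean document; each statement's English description precedes it below -/
import Mathlib

section
/- Let μ > 0, L ≥ 0, (μ_n) a sequence of positive reals with Σ_n |μ_n − μ| < ∞, A : ℝ^d → ℝ^{d'} linear, and α, β > 0 with β‖A‖² < α^{-1} − L/2. With M_n = [[ (μ_n α)^{-1} I , −Aᵀ ], [ −A , μ_n β^{-1} I ]] and M = [[ (μ α)^{-1} I , −Aᵀ ], [ −A , μ β^{-1} I ]], there exist summable sequences (e_n) and (f_n) of positive reals such that ‖x‖_M ≤ (1 + e_n)‖x‖_{M_n} and ‖x‖_{M_n} ≤ (1 + f_n)‖x‖_M for all n and all x ∈ ℝ^{d+d'}. -/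
open scoped RealInnerProductSpace

noncomputable def pairInner {d d' : ℕ}
    (x y : EuclideanSpace ℝ (Fin d) × EuclideanSpace ℝ (Fin d')) : ℝ :=
  ⟪x.1, y.1⟫ + ⟪x.2, y.2⟫

noncomputable def blockM {d d' : ℕ}
    (A : EuclideanSpace ℝ (Fin d) →L[ℝ] EuclideanSpace ℝ (Fin d'))
    (α β m : ℝ) (x : EuclideanSpace ℝ (Fin d) × EuclideanSpace ℝ (Fin d')) :
    EuclideanSpace ℝ (Fin d) × EuclideanSpace ℝ (Fin d') :=
  ((m * α)⁻¹ • x.1 - (ContinuousLinearMap.adjoint A) x.2, (m * β⁻¹) • x.2 - A x.1)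

open Filter Topology

/-!
Write `⟪x, M_m x⟫ = D_m(x) - 2⟪A x₁, x₂⟫` with diagonal part
`D_m(x) = (m α)⁻¹ ‖x₁‖² + m β⁻¹ ‖x₂‖²`. By AM-GM, `2 ‖A‖ ‖x₁‖ ‖x₂‖ ≤ √(αβ) ‖A‖ D_m(x)`, and the
step-size condition gives `√(αβ) ‖A‖ < 1`, so `⟪x, M_m x⟫ ≥ δ D_m(x)` with
`δ = 1 - √(αβ) ‖A‖ > 0` independent of `m`. Since the off-diagonal term does not depend on `m`,
`⟪x, M_{m'} x⟫ - ⟪x, M_m x⟫ = D_{m'}(x) - D_m(x) ≤ |m' - m| (1/m' + 1/m) D_m(x)`, which is at most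
`|m' - m| (1/m' + 1/m) / δ · ⟪x, M_m x⟫`. For `m, m' = μ, μ_n` this factor is summable in `n`.
-/

lemma Real.sqrt_le_one_add_mul_sqrt {a b t : ℝ} (ht : 0 ≤ t) (h : a ≤ (1 + t) * b) :
    √a ≤ (1 + t) * √b :=
  calc √a ≤ √(1 + t) * √b := by rw [← Real.sqrt_mul (by linarith)]; exact Real.sqrt_le_sqrt h
    _ ≤ (1 + t) * √b := by
        gcongr
        exact Real.sqrt_le_left (by linarith) |>.2 (by nlinarith)

section BlockForm

variable {E F : Type*} [SeminormedAddCommGroup E] [SeminormedAddCommGroup F] {α β m m' : ℝ}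

noncomputable def blockDiagForm (α β m : ℝ) (x : E × F) : ℝ :=
  (m * α)⁻¹ * ‖x.1‖ ^ 2 + (m * β⁻¹) * ‖x.2‖ ^ 2

lemma blockDiagForm_nonneg (hα : 0 < α) (hβ : 0 < β) (hm : 0 < m) (x : E × F) :
    0 ≤ blockDiagForm α β m x := by
  unfold blockDiagForm
  positivity

lemma two_mul_mul_le_sqrt_mul_blockDiagForm (hα : 0 < α) (hβ : 0 < β) (hm : 0 < m)
    (x : E × F) :
    2 * (‖x.1‖ * ‖x.2‖) ≤ √(α * β) * blockDiagForm α β m x := by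
  set s := √(α * β)
  have hs : 0 < s := Real.sqrt_pos.2 (by positivity)
  have hs2 : s ^ 2 = α * β := Real.sq_sqrt (by positivity)
  have key : s * blockDiagForm α β m x - 2 * (‖x.1‖ * ‖x.2‖)
      = s * (β * ‖x.1‖ - s * m * ‖x.2‖) ^ 2 / (m * α * β ^ 2) := by
    unfold blockDiagForm
    field_simp
    linear_combination (2 * m * β * ‖x.1‖ * ‖x.2‖ - s * m ^ 2 * ‖x.2‖ ^ 2) * hs2
  linarith [key, show 0 ≤ s * (β * ‖x.1‖ - s * m * ‖x.2‖) ^ 2 / (m * α * β ^ 2) by positivity]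

lemma blockDiagForm_le_one_add_mul (hα : 0 < α) (hβ : 0 < β) (hm : 0 < m) (hm' : 0 < m')
    (x : E × F) :
    blockDiagForm α β m' x ≤ (1 + |m' - m| * (m'⁻¹ + m⁻¹)) * blockDiagForm α β m x := by
  have h₁ : (m' * α)⁻¹ = (m * α)⁻¹ + (m - m') * m'⁻¹ * (m * α)⁻¹ := by
    field_simp
    ring
  have h₂ : m' * β⁻¹ = m * β⁻¹ + (m' - m) * m⁻¹ * (m * β⁻¹) := by
    field_simp
    ring
  have hp : 0 ≤ (m * α)⁻¹ * ‖x.1‖ ^ 2 := by positivity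
  have hq : 0 ≤ m * β⁻¹ * ‖x.2‖ ^ 2 := by positivity
  have hm₁ : (m - m') * m'⁻¹ ≤ |m' - m| * (m'⁻¹ + m⁻¹) := by
    rw [abs_sub_comm]
    nlinarith [le_abs_self (m - m'), abs_nonneg (m - m'), inv_pos.2 hm, inv_pos.2 hm']
  have hm₂ : (m' - m) * m⁻¹ ≤ |m' - m| * (m'⁻¹ + m⁻¹) := by
    nlinarith [le_abs_self (m' - m), abs_nonneg (m' - m), inv_pos.2 hm, inv_pos.2 hm']
  unfold blockDiagForm
  rw [h₁, h₂]
  nlinarith [mul_le_mul_of_nonneg_right hm₁ hp, mul_le_mul_of_nonneg_right hm₂ hq]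

variable [NormedSpace ℝ E] [InnerProductSpace ℝ F]

noncomputable def blockForm (A : E →L[ℝ] F) (α β m : ℝ) (x : E × F) : ℝ :=
  blockDiagForm α β m x - 2 * ⟪A x.1, x.2⟫

lemma mul_blockDiagForm_le_blockForm (A : E →L[ℝ] F) (hα : 0 < α) (hβ : 0 < β) (hm : 0 < m)
    (x : E × F) :
    (1 - √(α * β) * ‖A‖) * blockDiagForm α β m x ≤ blockForm A α β m x := by
  have hinner : ⟪A x.1, x.2⟫ ≤ ‖A‖ * (‖x.1‖ * ‖x.2‖) :=
    calc ⟪A x.1, x.2⟫ ≤ ‖A x.1‖ * ‖x.2‖ := real_inner_le_norm _ _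
      _ ≤ ‖A‖ * ‖x.1‖ * ‖x.2‖ := by gcongr; exact A.le_opNorm x.1
      _ = ‖A‖ * (‖x.1‖ * ‖x.2‖) := mul_assoc _ _ _
  have hcross := mul_le_mul_of_nonneg_left (two_mul_mul_le_sqrt_mul_blockDiagForm hα hβ hm x)
    (norm_nonneg A)
  unfold blockForm
  nlinarith

lemma blockForm_le_one_add_mul (A : E →L[ℝ] F) (hα : 0 < α) (hβ : 0 < β) (hm : 0 < m)
    (hm' : 0 < m') (hA : √(α * β) * ‖A‖ < 1) (x : E × F) :
    blockForm A α β m' x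
      ≤ (1 + |m' - m| * (m'⁻¹ + m⁻¹) / (1 - √(α * β) * ‖A‖)) * blockForm A α β m x := by
  have hlow := mul_blockDiagForm_le_blockForm A hα hβ hm x
  have hdiag := blockDiagForm_le_one_add_mul hα hβ hm hm' x
  set δ := 1 - √(α * β) * ‖A‖
  set K := |m' - m| * (m'⁻¹ + m⁻¹)
  have hδ : 0 < δ := sub_pos.2 hA
  have hK : 0 ≤ K := by positivity
  have hD := blockDiagForm_nonneg (E := E) (F := F) hα hβ hm x
  calc blockForm A α β m' x
        = blockForm A α β m x + (blockDiagForm α β m' x - blockDiagForm α β m x) := by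
        unfold blockForm; ring
    _ ≤ blockForm A α β m x + K / δ * (δ * blockDiagForm α β m x) := by
        rw [← mul_assoc, div_mul_cancel₀ K hδ.ne']
        linarith
    _ ≤ (1 + K / δ) * blockForm A α β m x := by
        linarith [mul_le_mul_of_nonneg_left hlow (div_nonneg hK hδ.le)]

lemma sqrt_blockForm_le_one_add_mul_sqrt (A : E →L[ℝ] F) (hα : 0 < α) (hβ : 0 < β)
    (hm : 0 < m) (hm' : 0 < m') (hA : √(α * β) * ‖A‖ < 1) {t : ℝ}
    (ht : |m' - m| * (m'⁻¹ + m⁻¹) / (1 - √(α * β) * ‖A‖) ≤ t) (x : E × F) :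
    √(blockForm A α β m' x) ≤ (1 + t) * √(blockForm A α β m x) := by
  have hK : 0 ≤ |m' - m| * (m'⁻¹ + m⁻¹) / (1 - √(α * β) * ‖A‖) := by
    have := sub_pos.2 hA
    positivity
  calc √(blockForm A α β m' x)
      ≤ (1 + |m' - m| * (m'⁻¹ + m⁻¹) / (1 - √(α * β) * ‖A‖)) * √(blockForm A α β m x) :=
        Real.sqrt_le_one_add_mul_sqrt hK (blockForm_le_one_add_mul A hα hβ hm hm' hA x)
    _ ≤ (1 + t) * √(blockForm A α β m x) := by gcongr

end BlockForm

lemma pairInner_blockM {d d' : ℕ} (A : EuclideanSpace ℝ (Fin d) →L[ℝ] EuclideanSpace ℝ (Fin d'))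
    (α β m : ℝ) (x : EuclideanSpace ℝ (Fin d) × EuclideanSpace ℝ (Fin d')) :
    pairInner x (blockM A α β m x) = blockForm A α β m x := by
  simp only [pairInner, blockM, blockForm, blockDiagForm, inner_sub_right, real_inner_smul_right,
    ContinuousLinearMap.adjoint_inner_right, real_inner_self_eq_norm_sq, real_inner_comm x.2]
  ring

lemma summable_abs_sub_mul_inv_add_inv {u : ℕ → ℝ} {c : ℝ} (hc : c ≠ 0)
    (hu : Summable fun n => |u n - c|) :
    Summable fun n => |u n - c| * ((u n)⁻¹ + c⁻¹) := by
  have hlim : Tendsto u atTop (𝓝 c) := by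
    rw [tendsto_iff_norm_sub_tendsto_zero]
    exact hu.tendsto_atTop_zero
  refine Summable.mul_tendsto_const (c := c⁻¹ + c⁻¹) (by simpa using hu) ?_
  rw [Nat.cofinite_eq_atTop]
  exact (hlim.inv₀ hc).add_const _

/-- There exist summable sequences `(e_n)`, `(f_n)` of positive reals such that
`‖x‖_M ≤ (1 + e_n)‖x‖_{M_n}` and `‖x‖_{M_n} ≤ (1 + f_n)‖x‖_M` for all `n` and `x`,
where `‖x‖_N = √⟨x, N x⟩`. -/
theorem blockM_norm_equivalence {d d' : ℕ}
    (μ : ℝ) (hμ : 0 < μ) (L : ℝ) (hL : 0 ≤ L)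
    (μs : ℕ → ℝ) (hμs : ∀ n, 0 < μs n)
    (hsum : Summable fun n => |μs n - μ|)
    (A : EuclideanSpace ℝ (Fin d) →L[ℝ] EuclideanSpace ℝ (Fin d'))
    (α β : ℝ) (hα : 0 < α) (hβ : 0 < β)
    (hstep : β * ‖A‖ ^ 2 < α⁻¹ - L / 2) :
    ∃ e f : ℕ → ℝ, (∀ n, 0 < e n) ∧ (∀ n, 0 < f n) ∧ Summable e ∧ Summable f ∧
      ∀ n, ∀ x : EuclideanSpace ℝ (Fin d) × EuclideanSpace ℝ (Fin d'),
        Real.sqrt (pairInner x (blockM A α β μ x))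
            ≤ (1 + e n) * Real.sqrt (pairInner x (blockM A α β (μs n) x)) ∧
        Real.sqrt (pairInner x (blockM A α β (μs n) x))
            ≤ (1 + f n) * Real.sqrt (pairInner x (blockM A α β μ x)) := by
  have hA : √(α * β) * ‖A‖ < 1 := by
    have h : α * β * ‖A‖ ^ 2 < 1 := by
      have := mul_lt_mul_of_pos_left (hstep.trans_le (by linarith : α⁻¹ - L / 2 ≤ α⁻¹)) hα
      rwa [mul_inv_cancel₀ hα.ne', ← mul_assoc] at this
    rw [← Real.sqrt_sq (norm_nonneg A), ← Real.sqrt_mul (by positivity), Real.sqrt_lt' one_pos]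
    linarith
  set δ := 1 - √(α * β) * ‖A‖
  set t : ℕ → ℝ := fun n => |μs n - μ| * ((μs n)⁻¹ + μ⁻¹) / δ
  -- the geometric term only makes the sequence strictly positive
  set e : ℕ → ℝ := fun n => t n + (1 / 2) ^ n
  have ht : ∀ n, 0 ≤ t n := fun n => by
    have := hμs n
    have : 0 < δ := sub_pos.2 hA
    positivity
  have hte : ∀ n, t n < e n := fun n => lt_add_of_pos_right _ (by positivity)
  have he : ∀ n, 0 < e n := fun n => (ht n).trans_lt (hte n)
  have hesum : Summable e :=
    ((summable_abs_sub_mul_inv_add_inv hμ.ne' hsum).div_const δ).add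
      (summable_geometric_of_lt_one (by norm_num) (by norm_num))
  refine ⟨e, e, he, he, hesum, hesum, fun n x => ⟨?_, ?_⟩⟩ <;> simp only [pairInner_blockM]
  · have hsymm : |μ - μs n| * (μ⁻¹ + (μs n)⁻¹) / δ = t n := by
      rw [abs_sub_comm, add_comm μ⁻¹]
    exact sqrt_blockForm_le_one_add_mul_sqrt A hα hβ (hμs n) hμ hA (hsymm.trans_le (hte n).le) x
  · exact sqrt_blockForm_le_one_add_mul_sqrt A hα hβ hμ (hμs n) hA (hte n).le x
end

section
/- Let f : ℝ^d → ℝ be convex and differentiable with L-Lipschitz gradient (L > 0). Then for all a, b, c ∈ ℝ^d: −⟨c − a, ∇f(b) − ∇f(a)⟩ ≤ (L/4)‖b − c‖₂²; in particular ⟨c − a, ∇f(b) − ∇f(a)⟩ ≥ −(L/4)‖b − c‖₂². -/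
open scoped RealInnerProductSpace

/-! Convexity (a first-order lower bound at `a`) and the descent lemma (a quadratic upper bound at
`b`), both evaluated at the gradient step `b - L⁻¹ • (∇f b - ∇f a)`, give cocoercivity:
`‖g‖² / L ≤ ⟪b - a, g⟫` for `g = ∇f b - ∇f a`. Since `c - a = (b - a) - (b - c)`, Cauchy–Schwarz
then gives `-⟪c - a, g⟫ ≤ ‖b - c‖ ‖g‖ - ‖g‖² / L ≤ L / 4 ‖b - c‖²`. -/

section

variable {E : Type*} [NormedAddCommGroup E] [InnerProductSpace ℝ E] {f : E → ℝ} {f' : E → E} {L : ℝ}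

theorem inner_sub_le_mul_sq_of_lipschitz (hlip : ∀ x y, ‖f' x - f' y‖ ≤ L * ‖x - y‖) (x y : E)
    {t : ℝ} (ht : 0 ≤ t) :
    ⟪f' (AffineMap.lineMap x y t) - f' x, y - x⟫ ≤ L * t * ‖y - x‖ ^ 2 := by
  calc ⟪f' (AffineMap.lineMap x y t) - f' x, y - x⟫
      ≤ ‖f' (AffineMap.lineMap x y t) - f' x‖ * ‖y - x‖ := real_inner_le_norm _ _
    _ ≤ L * ‖AffineMap.lineMap x y t - x‖ * ‖y - x‖ := by gcongr; exact hlip _ _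
    _ = L * t * ‖y - x‖ ^ 2 := by
      rw [← dist_eq_norm, dist_lineMap_left, Real.norm_of_nonneg ht, dist_eq_norm', sq]; ring

variable [CompleteSpace E]

theorem HasGradientAt.hasDerivAt_comp_lineMap {g x y : E} {t : ℝ}
    (h : HasGradientAt f g (AffineMap.lineMap x y t)) :
    HasDerivAt (fun s : ℝ ↦ f (AffineMap.lineMap x y s)) ⟪g, y - x⟫ t := by
  simpa [InnerProductSpace.toDual_apply_apply, Function.comp_def] using
    h.hasFDerivAt.comp_hasDerivAt t AffineMap.hasDerivAt_lineMap

theorem ConvexOn.add_inner_le_of_hasGradientAt (hf : ConvexOn ℝ Set.univ f) {g x : E}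
    (h : HasGradientAt f g x) (y : E) : f x + ⟪g, y - x⟫ ≤ f y := by
  have hline : ConvexOn ℝ Set.univ (fun t : ℝ => f (AffineMap.lineMap x y t)) :=
    hf.comp_affineMap (AffineMap.lineMap x y)
  have hslope := hline.le_slope_of_hasDerivAt (Set.mem_univ 0) (Set.mem_univ 1) one_pos
    (HasGradientAt.hasDerivAt_comp_lineMap (by simpa using h))
  simp only [slope_def_field, AffineMap.lineMap_apply_zero, AffineMap.lineMap_apply_one,
    sub_zero, div_one] at hslope
  linarith

theorem le_add_inner_add_sq_of_lipschitz_gradient (hgrad : ∀ x, HasGradientAt f (f' x) x)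
    (hlip : ∀ x y, ‖f' x - f' y‖ ≤ L * ‖x - y‖) (x y : E) :
    f y ≤ f x + ⟪f' x, y - x⟫ + L / 2 * ‖y - x‖ ^ 2 := by
  set φ : ℝ → ℝ := fun t ↦
    f (AffineMap.lineMap x y t) - t * ⟪f' x, y - x⟫ - L / 2 * ‖y - x‖ ^ 2 * t ^ 2
  have hφ (t : ℝ) : HasDerivAt φ
      (⟪f' (AffineMap.lineMap x y t) - f' x, y - x⟫ - L * t * ‖y - x‖ ^ 2) t := by
    have := (((hgrad (AffineMap.lineMap x y t)).hasDerivAt_comp_lineMap).sub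
      ((hasDerivAt_id t).mul_const ⟪f' x, y - x⟫)).sub
      ((hasDerivAt_pow 2 t).const_mul (L / 2 * ‖y - x‖ ^ 2))
    exact this.congr_deriv (by rw [inner_sub_left]; push_cast; ring)
  have hanti : AntitoneOn φ (Set.Ici 0) := by
    refine antitoneOn_of_deriv_nonpos (convex_Ici 0)
      (fun t _ ↦ (hφ t).continuousAt.continuousWithinAt)
      (fun t _ ↦ (hφ t).differentiableAt.differentiableWithinAt) fun t ht ↦ ?_
    rw [interior_Ici] at ht
    rw [(hφ t).deriv, sub_nonpos]
    exact inner_sub_le_mul_sq_of_lipschitz hlip x y ht.le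
  have h10 : φ 1 ≤ φ 0 := hanti (Set.mem_Ici.2 le_rfl) (Set.mem_Ici.2 zero_le_one) zero_le_one
  simp only [φ, AffineMap.lineMap_apply_zero, AffineMap.lineMap_apply_one] at h10
  linarith

theorem ConvexOn.sq_norm_sub_gradient_div_le (hf : ConvexOn ℝ Set.univ f) (hL : 0 < L)
    (hgrad : ∀ x, HasGradientAt f (f' x) x) (hlip : ∀ x y, ‖f' x - f' y‖ ≤ L * ‖x - y‖)
    (a b : E) : ‖f' b - f' a‖ ^ 2 / (2 * L) ≤ f b - f a - ⟪f' a, b - a⟫ := by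
  set g := f' b - f' a
  have hlower := hf.add_inner_le_of_hasGradientAt (hgrad a) (b - L⁻¹ • g)
  have hupper := le_add_inner_add_sq_of_lipschitz_gradient hgrad hlip b (b - L⁻¹ • g)
  rw [sub_right_comm, inner_sub_right, real_inner_smul_right] at hlower
  rw [sub_sub_cancel_left, inner_neg_right, real_inner_smul_right, norm_neg, norm_smul,
    Real.norm_of_nonneg (inv_nonneg.2 hL.le)] at hupper
  have hgg : ⟪f' b, g⟫ - ⟪f' a, g⟫ = ‖g‖ ^ 2 := by
    rw [← inner_sub_left, real_inner_self_eq_norm_sq]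
  have hquad : L / 2 * (L⁻¹ * ‖g‖) ^ 2 = ‖g‖ ^ 2 / (2 * L) := by field_simp
  have hlin : L⁻¹ * ⟪f' b, g⟫ - L⁻¹ * ⟪f' a, g⟫ = ‖g‖ ^ 2 / (2 * L) + ‖g‖ ^ 2 / (2 * L) := by
    rw [← mul_sub, hgg]; field_simp; ring
  linarith

theorem ConvexOn.sq_norm_sub_div_le_inner_gradient (hf : ConvexOn ℝ Set.univ f) (hL : 0 < L)
    (hgrad : ∀ x, HasGradientAt f (f' x) x) (hlip : ∀ x y, ‖f' x - f' y‖ ≤ L * ‖x - y‖)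
    (a b : E) : ‖f' b - f' a‖ ^ 2 / L ≤ ⟪f' b - f' a, b - a⟫ := by
  have hab := hf.sq_norm_sub_gradient_div_le hL hgrad hlip a b
  have hba := hf.sq_norm_sub_gradient_div_le hL hgrad hlip b a
  rw [norm_sub_rev] at hba
  have hsum : ⟪f' b - f' a, b - a⟫ = -⟪f' a, b - a⟫ - ⟪f' b, a - b⟫ := by
    rw [← neg_sub b a, inner_neg_right, inner_sub_left]; ring
  have hhalf : ‖f' b - f' a‖ ^ 2 / L = 2 * (‖f' b - f' a‖ ^ 2 / (2 * L)) := by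
    field_simp
  linarith

end

theorem mul_sub_sq_div_le {L : ℝ} (hL : 0 < L) (s t : ℝ) : s * t - t ^ 2 / L ≤ L / 4 * s ^ 2 := by
  have hsq : s * t - t ^ 2 / L = L / 4 * s ^ 2 - (L * s - 2 * t) ^ 2 / (4 * L) := by
    field_simp; ring
  rw [hsq, sub_le_self_iff]
  positivity

/-- If `f` is convex with `L`-Lipschitz gradient, then for all `a, b, c`:
`−⟨c − a, ∇f(b) − ∇f(a)⟩ ≤ (L/4)‖b − c‖²`; in particular
`⟨c − a, ∇f(b) − ∇f(a)⟩ ≥ −(L/4)‖b − c‖²`. -/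
theorem neg_inner_grad_le {d : ℕ}
    (f : EuclideanSpace ℝ (Fin d) → ℝ)
    (f' : EuclideanSpace ℝ (Fin d) → EuclideanSpace ℝ (Fin d))
    (L : ℝ) (hL : 0 < L)
    (hconv : ConvexOn ℝ Set.univ f)
    (hgrad : ∀ x, HasGradientAt f (f' x) x)
    (hlip : ∀ x y, ‖f' x - f' y‖ ≤ L * ‖x - y‖)
    (a b c : EuclideanSpace ℝ (Fin d)) :
    -⟪c - a, f' b - f' a⟫ ≤ L / 4 * ‖b - c‖ ^ 2 ∧
    ⟪c - a, f' b - f' a⟫ ≥ -(L / 4 * ‖b - c‖ ^ 2) := by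
  set g := f' b - f' a
  have hcoco : ‖g‖ ^ 2 / L ≤ ⟪b - a, g⟫ := by
    rw [real_inner_comm]; exact hconv.sq_norm_sub_div_le_inner_gradient hL hgrad hlip a b
  have hsplit : -⟪c - a, g⟫ = ⟪b - c, g⟫ - ⟪b - a, g⟫ := by
    rw [← sub_sub_sub_cancel_left a c b, inner_sub_left]; ring
  have hbound : -⟪c - a, g⟫ ≤ L / 4 * ‖b - c‖ ^ 2 := by
    linarith [real_inner_le_norm (b - c) g, mul_sub_sq_div_le hL ‖b - c‖ ‖g‖]
  exact ⟨hbound, by linarith⟩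
end
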